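/- arXiv:1805.01019 — 3 statements merged into one kernel-verified Lean document; each statement's English description precedes it below -/
import Mathlib

section
/- If T : ℝ → ℝ is positive and A > 0, and for endowments w₁, w₂ > 0 the investments y₁ = w₁·g(w₁) and y₂ = w₂·g(w₂) are each optimal (i.e., y₁ maximizes y ↦ (w₁ - y)·T(y)^A over [0, w₁] and y₂ maximizes y ↦ (w₂ - y)·T(y)^A over [0, w₂]), then (y₂ - y₁)·(w₂ - w₁) ≥ 0; in particular total investment w·g(w) is non-decreasing in w. -/
open Real Set

lemma investment_key
    (T : ℝ → ℝ) (hT : ∀ y, 0 < T y) (A : ℝ) (hA : 0 < A)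
    (w₁ w₂ y₁ y₂ : ℝ) (h12 : w₁ < w₂)
    (hy₁mem : y₁ ∈ Icc 0 w₁) (hy₂mem : y₂ ∈ Icc 0 w₂)
    (hy₁ : ∀ y ∈ Icc 0 w₁, (w₁ - y) * T y ^ A ≤ (w₁ - y₁) * T y₁ ^ A)
    (hy₂ : ∀ y ∈ Icc 0 w₂, (w₂ - y) * T y ^ A ≤ (w₂ - y₂) * T y₂ ^ A) :
    y₁ ≤ y₂ := by
  by_contra h
  push_neg at h
  have ha : (0:ℝ) < T y₁ ^ A := Real.rpow_pos_of_pos (hT y₁) A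
  have hb : (0:ℝ) < T y₂ ^ A := Real.rpow_pos_of_pos (hT y₂) A
  have h1 : (w₁ - y₂) * T y₂ ^ A ≤ (w₁ - y₁) * T y₁ ^ A :=
    hy₁ y₂ ⟨hy₂mem.1, le_trans h.le hy₁mem.2⟩
  have h2 : (w₂ - y₁) * T y₁ ^ A ≤ (w₂ - y₂) * T y₂ ^ A :=
    hy₂ y₁ ⟨hy₁mem.1, le_trans hy₁mem.2 h12.le⟩
  have hab : T y₁ ^ A ≤ T y₂ ^ A := by nlinarith
  nlinarith [hy₁mem.2, mul_pos hb (sub_pos.2 h)]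

/-- Optimal total investment is non-decreasing in endowment: if `y₁` and `y₂` are
optimal investments at endowments `w₁` and `w₂` respectively (maximizing
`(w - y) * T y ^ A` over `[0, w]`), then `(y₂ - y₁) * (w₂ - w₁) ≥ 0`. -/
theorem investment_nondecreasing
    (T : ℝ → ℝ) (hT : ∀ y, 0 < T y) (A : ℝ) (hA : 0 < A)
    (w₁ w₂ y₁ y₂ : ℝ) (hw₁ : 0 < w₁) (hw₂ : 0 < w₂)
    (hy₁mem : y₁ ∈ Icc 0 w₁) (hy₂mem : y₂ ∈ Icc 0 w₂)
    (hy₁ : ∀ y ∈ Icc 0 w₁, (w₁ - y) * T y ^ A ≤ (w₁ - y₁) * T y₁ ^ A)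
    (hy₂ : ∀ y ∈ Icc 0 w₂, (w₂ - y) * T y ^ A ≤ (w₂ - y₂) * T y₂ ^ A) :
    0 ≤ (y₂ - y₁) * (w₂ - w₁) := by
  rcases lt_trichotomy w₁ w₂ with h | h | h
  · have := investment_key T hT A hA w₁ w₂ y₁ y₂ h hy₁mem hy₂mem hy₁ hy₂
    nlinarith
  · simp [h]
  · have := investment_key T hT A hA w₂ w₁ y₂ y₁ h hy₂mem hy₁mem hy₂ hy₁
    nlinarith
end

section
/- Let A > 0 and x₁ ∈ (A/(A+1), 1). If x₀ ∈ (0,1) satisfies x₀ > 1 - x₁^A·(1-x₁)·((A+1)/A)^A, then x₀ > A/(A+1). In particular, since the maximum of x^A(1-x) over (0,1) is (A/(A+1))^A·(1/(A+1)), the bound 1 - x₁^A(1-x₁)((A+1)/A)^A is always at least A/(A+1). -/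
/-! The function `x ↦ x^A (1 - x)` is maximised on `[0, ∞)` at `x = A/(A+1)`, with maximum
`(A/(A+1))^A / (A+1)`: this is weighted AM–GM, obtained here from `log y ≤ y - 1`.
Hence `1 - x₁^A (1 - x₁) ((A+1)/A)^A ≥ 1 - 1/(A+1) = A/(A+1)`. -/

open Real Set

theorem rpow_mul_le_one_of_mul_add_eq {A t s : ℝ} (hA : 0 < A) (ht : 0 ≤ t) (hs : 0 ≤ s)
    (h : A * t + s = A + 1) : t ^ A * s ≤ 1 := by
  rcases ht.eq_or_lt with rfl | ht
  · simp [zero_rpow hA.ne']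
  rcases hs.eq_or_lt with rfl | hs
  · simp
  calc t ^ A * s = exp (A * log t + log s) := by
        rw [exp_add, rpow_def_of_pos ht, exp_log hs, mul_comm A]
    _ ≤ exp 0 :=
        exp_le_exp.mpr (by nlinarith [log_le_sub_one_of_pos ht, log_le_sub_one_of_pos hs])
    _ = 1 := exp_zero

theorem rpow_mul_one_sub_mul_rpow_le {A x : ℝ} (hA : 0 < A) (hx : 0 ≤ x) :
    x ^ A * (1 - x) * ((A + 1) / A) ^ A ≤ 1 / (A + 1) := by
  have hA1 : 0 < A + 1 := by linarith
  rcases le_or_gt x 1 with hx1 | hx1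
  · have key := rpow_mul_le_one_of_mul_add_eq (t := x * ((A + 1) / A))
      (s := (1 - x) * (A + 1)) hA (by positivity) (mul_nonneg (sub_nonneg.mpr hx1) hA1.le)
      (by field_simp; ring)
    rw [mul_rpow hx (by positivity)] at key
    rw [le_div_iff₀ hA1]
    linarith
  · have hneg : x ^ A * (1 - x) ≤ 0 :=
      mul_nonpos_of_nonneg_of_nonpos (rpow_nonneg hx A) (by linarith)
    have hpos : 0 ≤ 1 / (A + 1) := by positivity
    nlinarith [rpow_nonneg (div_pos hA1 hA).le A]

/-- If `x₁ ∈ (A/(A+1), 1)` and `x₀ > 1 - x₁^A * (1 - x₁) * ((A+1)/A)^A`, then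
`x₀ > A/(A+1)`; moreover the bound `1 - x₁^A * (1-x₁) * ((A+1)/A)^A` is always
at least `A/(A+1)`, since the maximum of `x^A (1-x)` on `(0,1)` is
`(A/(A+1))^A * (1/(A+1))`. -/
theorem lower_branch_above_alpha (A x₁ : ℝ) (hA : 0 < A)
    (hx₁ : x₁ ∈ Ioo (A / (A + 1)) 1) :
    (∀ x₀ ∈ Ioo (0:ℝ) 1,
        1 - x₁ ^ A * (1 - x₁) * ((A + 1) / A) ^ A < x₀ → A / (A + 1) < x₀) ∧
    A / (A + 1) ≤ 1 - x₁ ^ A * (1 - x₁) * ((A + 1) / A) ^ A := by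
  have hx₁_nonneg : 0 ≤ x₁ := (div_pos hA (by linarith)).le.trans hx₁.1.le
  have hbound : A / (A + 1) ≤ 1 - x₁ ^ A * (1 - x₁) * ((A + 1) / A) ^ A := by
    have hsplit : A / (A + 1) = 1 - 1 / (A + 1) := by field_simp; ring
    linarith [rpow_mul_one_sub_mul_rpow_le hA hx₁_nonneg]
  exact ⟨fun _ _ h => hbound.trans_lt h, hbound⟩
end

section
/- Corollary of the rat-race computation: under the hypotheses above, if additionally r(z*) ≤ 1/ḡ(z*) ≤ (A+1)/(A + ε(A+1)) at some z* and ḡ(z) ≥ A/(A+1) + ε on all of (−∞, z*], then integrating backwards, either ḡ exceeds 1 at some z < z* or r(z) < 1 at some z < z* — i.e., effort above α = A/(A+1) at equilibrium forces a wealth trap. -/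
/-!
With `c = ε (A + 1) / A`, the bound `ḡ ≥ A/(A+1) + ε` makes the factor
`((A+1)/A · ḡ - 1)/(1 - ḡ)` in the equation for `r` at least `c`, so the logarithmic derivative
of `r` dominates that of `ḡ^c e^{cz}` as long as `1 + ḡ'/ḡ ≥ 0`. Hence `r / (ḡ^c e^{cz})` is
nondecreasing on `(-∞, z*]`, and since `ḡ < 1` this forces `r(z) ≤ C e^{cz} → 0` as `z → -∞`.
-/

open Real Set Filter

section LogComparison

variable {r g : ℝ → ℝ} {c : ℝ}

theorem hasDerivAt_log_sub_mul_log_sub_mul (hr : ∀ z, 0 < r z) (hg : ∀ z, 0 < g z)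
    (hrd : Differentiable ℝ r) (hgd : Differentiable ℝ g) (z : ℝ) :
    HasDerivAt (fun z => log (r z) - c * log (g z) - c * z)
      (deriv r z / r z - c * (deriv g z / g z) - c) z := by
  have hlogr := (hrd z).hasDerivAt.log (hr z).ne'
  have hlogg := (hgd z).hasDerivAt.log (hg z).ne'
  have hlin : HasDerivAt (fun z => c * z) c z := by simpa using (hasDerivAt_id z).const_mul c
  exact (hlogr.sub (hlogg.const_mul c)).sub hlin

theorem monotoneOn_log_sub_mul_log_sub_mul {z₀ : ℝ} (hr : ∀ z, 0 < r z) (hg : ∀ z, 0 < g z)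
    (hrd : Differentiable ℝ r) (hgd : Differentiable ℝ g)
    (hlog : ∀ z ≤ z₀, c * (1 + deriv g z / g z) ≤ deriv r z / r z) :
    MonotoneOn (fun z => log (r z) - c * log (g z) - c * z) (Iic z₀) := by
  have hφ := hasDerivAt_log_sub_mul_log_sub_mul (c := c) hr hg hrd hgd
  refine monotoneOn_of_hasDerivWithinAt_nonneg (convex_Iic z₀)
    (fun z _ => (hφ z).continuousAt.continuousWithinAt)
    (fun z _ => (hφ z).hasDerivWithinAt) fun z hz => ?_
  rw [interior_Iic] at hz
  linarith [hlog z (le_of_lt hz), mul_one_add c (deriv g z / g z)]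

theorem exists_lt_one_of_mul_logDeriv_le {z₀ : ℝ} (hc : 0 < c) (hr : ∀ z, 0 < r z)
    (hg : ∀ z, 0 < g z) (hg₁ : ∀ z, g z ≤ 1) (hrd : Differentiable ℝ r) (hgd : Differentiable ℝ g)
    (hlog : ∀ z ≤ z₀, c * (1 + deriv g z / g z) ≤ deriv r z / r z) :
    ∃ z < z₀, r z < 1 := by
  set φ := fun z => log (r z) - c * log (g z) - c * z
  have hφ := monotoneOn_log_sub_mul_log_sub_mul hr hg hrd hgd hlog
  have hlin : Tendsto (fun z => φ z₀ + c * z) atBot atBot :=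
    tendsto_atBot_add_const_left _ _ (tendsto_id.const_mul_atBot hc)
  obtain ⟨z, hz, hneg⟩ := ((eventually_lt_atBot z₀).and (hlin.eventually_lt_atBot 0)).exists
  refine ⟨z, hz, (log_neg_iff (hr z)).mp ?_⟩
  have hφz : φ z ≤ φ z₀ := hφ (le_of_lt hz) (mem_Iic.2 le_rfl) (le_of_lt hz)
  have hlogg : c * log (g z) ≤ 0 :=
    mul_nonpos_of_nonneg_of_nonpos hc.le (log_nonpos (hg z).le (hg₁ z))
  simp only [φ] at hφz hneg
  linarith

end LogComparison

theorem mul_div_le_growth_factor {A ε g : ℝ} (hA : 0 < A) (hε : 0 ≤ ε) (hg₁ : g < 1)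
    (hbig : A / (A + 1) + ε ≤ g) :
    ε * (A + 1) / A ≤ ((A + 1) / A * g - 1) / (1 - g) := by
  have hsep : ε * (A + 1) / A ≤ (A + 1) / A * g - 1 := by
    have h := mul_le_mul_of_nonneg_left hbig (div_pos (by linarith : 0 < A + 1) hA).le
    have hsplit : (A + 1) / A * (A / (A + 1) + ε) = 1 + ε * (A + 1) / A := by
      field_simp
    linarith
  have hg₀ : 0 ≤ g := le_trans (by positivity) hbig
  calc ε * (A + 1) / A ≤ (A + 1) / A * g - 1 := hsep
    _ ≤ ((A + 1) / A * g - 1) / (1 - g) :=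
      le_div_self (le_trans (by positivity) hsep) (by linarith) (by linarith)

theorem rat_race_corollary_general
    (A ε : ℝ) (hA : 0 < A) (hε : 0 < ε)
    (gbar r : ℝ → ℝ)
    (hgbar : ∀ z, gbar z ∈ Ioo (0:ℝ) 1) (hrpos : ∀ z, 0 < r z)
    (hgdiff : Differentiable ℝ gbar) (hrdiff : Differentiable ℝ r)
    (hderiv : ∀ z, deriv r z =
      r z * (1 + deriv gbar z / gbar z) * ((A + 1) / A * gbar z - 1) / (1 - gbar z))
    (hmono : ∀ z, 0 ≤ 1 + deriv gbar z / gbar z)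
    (zstar : ℝ)
    (hbig : ∀ z ≤ zstar, A / (A + 1) + ε ≤ gbar z) :
    (∃ z < zstar, 1 < gbar z) ∨ (∃ z < zstar, r z < 1) := by
  right
  refine exists_lt_one_of_mul_logDeriv_le (c := ε * (A + 1) / A) (by positivity) hrpos
    (fun z => (hgbar z).1) (fun z => (hgbar z).2.le) hrdiff hgdiff fun z hz => ?_
  have hlogDeriv : deriv r z / r z = (1 + deriv gbar z / gbar z) *
      (((A + 1) / A * gbar z - 1) / (1 - gbar z)) := by
    rw [hderiv z]
    field_simp [(hrpos z).ne', (sub_pos.mpr (hgbar z).2).ne']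
  rw [hlogDeriv, mul_comm]
  exact mul_le_mul_of_nonneg_left
    (mul_div_le_growth_factor hA hε.le (hgbar z).2 (hbig z hz)) (hmono z)

/-- Corollary of the rat-race computation: if at `z*` the return satisfies
`r z* ≤ 1/ḡ z* ≤ (A+1)/(A + ε(A+1))` and `ḡ ≥ A/(A+1) + ε` on all of
`(-∞, z*]`, then either `ḡ` exceeds `1` somewhere below `z*` or `r < 1`
somewhere below `z*` (a wealth trap). -/
theorem rat_race_corollary
    (A ε : ℝ) (hA : 0 < A) (hε : 0 < ε)
    (gbar r : ℝ → ℝ)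
    (hgbar : ∀ z, gbar z ∈ Ioo (0:ℝ) 1) (hrpos : ∀ z, 0 < r z)
    (hgdiff : Differentiable ℝ gbar) (hrdiff : Differentiable ℝ r)
    (hderiv : ∀ z, deriv r z =
      r z * (1 + deriv gbar z / gbar z) * ((A + 1) / A * gbar z - 1) / (1 - gbar z))
    (hmono : ∀ z, 0 ≤ 1 + deriv gbar z / gbar z)
    (zstar : ℝ)
    (hstar₁ : r zstar ≤ 1 / gbar zstar)
    (hstar₂ : 1 / gbar zstar ≤ (A + 1) / (A + ε * (A + 1)))
    (hbig : ∀ z ≤ zstar, A / (A + 1) + ε ≤ gbar z) :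
    (∃ z < zstar, 1 < gbar z) ∨ (∃ z < zstar, r z < 1) :=
  rat_race_corollary_general A ε hA hε gbar r hgbar hrpos hgdiff hrdiff hderiv hmono zstar hbig
end
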